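/- Let N be a natural number and for each j ∈ {1, …, N} let q_j be a natural number and Ī_j : ℝ → ℝ a function that is concave on the interval [0, q_j], with Ī_j(0) = 0 and Ī_j(r) ≥ 0 for all r ∈ [0, q_j]. Let W, W' : {1, …, N} → ℕ satisfy W_j ≤ W'_j for every j, and let ν : {1, …, N} → ℕ satisfy ν_j ≤ W_j·q_j for every j. Then ∑_{j=1}^{N} Ī_j(ν_j/W_j)·W_j ≤ ∑_{j=1}^{N} Ī_j(ν_j/W'_j)·W'_j, where a summand is interpreted as 0 whenever the corresponding span W_j (respectively W'_j) is 0 (in which case necessarily ν_j = 0). -/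

import Mathlib

/-! The summand `w ↦ Ī(ν / w) * w` is the perspective of the concave function `Ī`, and with
`Ī 0 = 0` concavity along the segment from `0` gives `(w / w') * Ī(ν / w) ≤ Ī(ν / w')`
whenever `w ≤ w'`; multiplying by `w'` compares the summands termwise. -/

theorem ConcaveOn.smul_le_map_smul {𝕜 E β : Type*} [Field 𝕜] [LinearOrder 𝕜] [IsStrictOrderedRing 𝕜]
    [AddCommGroup E] [Module 𝕜 E] [AddCommGroup β] [PartialOrder β] [IsOrderedAddMonoid β]
    [Module 𝕜 β] [PosSMulMono 𝕜 β] {s : Set E} {f : E → β} (hf : ConcaveOn 𝕜 s f)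
    (h0 : (0 : E) ∈ s) (hf0 : 0 ≤ f 0) {x : E} (hx : x ∈ s) {a : 𝕜} (ha0 : 0 ≤ a) (ha1 : a ≤ 1) :
    a • f x ≤ f (a • x) := by
  have hseg := hf.2 h0 hx (sub_nonneg.2 ha1) ha0 (sub_add_cancel 1 a)
  rw [smul_zero, zero_add] at hseg
  exact le_trans (le_add_of_nonneg_left (smul_nonneg (sub_nonneg.2 ha1) hf0)) hseg

theorem ConcaveOn.map_div_mul_le_map_div_mul {s : Set ℝ} {f : ℝ → ℝ} (hf : ConcaveOn ℝ s f)
    (h0 : (0 : ℝ) ∈ s) (hf0 : 0 ≤ f 0) {x w w' : ℝ} (hx : x / w ∈ s) (hw : 0 < w)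
    (hww' : w ≤ w') : f (x / w) * w ≤ f (x / w') * w' := by
  have hw' : 0 < w' := hw.trans_le hww'
  have hscale := hf.smul_le_map_smul h0 hf0 hx (div_nonneg hw.le hw'.le)
    ((div_le_one hw').2 hww')
  have hpoint : w / w' * (x / w) = x / w' := by field_simp
  rw [smul_eq_mul, smul_eq_mul, hpoint] at hscale
  calc f (x / w) * w = (w / w' * f (x / w)) * w' := by field_simp
    _ ≤ f (x / w') * w' := mul_le_mul_of_nonneg_right hscale hw'.le

theorem stmt_11_general (N : ℕ) (q : ℕ → ℕ) (Ibar : ℕ → ℝ → ℝ)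
    (hconc : ∀ j < N, ConcaveOn ℝ (Set.Icc (0 : ℝ) (q j : ℝ)) (Ibar j))
    (h0 : ∀ j < N, Ibar j 0 = 0)
    (W W' ν : ℕ → ℕ)
    (hWW' : ∀ j < N, W j ≤ W' j)
    (hν : ∀ j < N, ν j ≤ W j * q j) :
    ∑ j ∈ Finset.range N, Ibar j ((ν j : ℝ) / (W j : ℝ)) * (W j : ℝ) ≤
      ∑ j ∈ Finset.range N, Ibar j ((ν j : ℝ) / (W' j : ℝ)) * (W' j : ℝ) := by
  refine Finset.sum_le_sum fun j hj ↦ ?_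
  rw [Finset.mem_range] at hj
  rcases (W j).eq_zero_or_pos with hW | hW
  · have hν0 : ν j = 0 := by simpa [hW] using hν j hj
    simp [hW, hν0, h0 j hj]
  · have hνq : (ν j : ℝ) ≤ q j * W j := by rw [mul_comm]; exact_mod_cast hν j hj
    have hWr : (0 : ℝ) < W j := by exact_mod_cast hW
    exact (hconc j hj).map_div_mul_le_map_div_mul (by simp) (h0 j hj).ge
      ⟨by positivity, div_le_of_le_mul₀ hWr.le (Nat.cast_nonneg _) hνq⟩ hWr
      (by exact_mod_cast hWW' j hj)

/-- Enlarging the per-interval spans while keeping the memory assignment cannot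
decrease the total stall `∑ Ī_j(ν_j / W_j) * W_j` (a summand being `0` whenever
the corresponding span is `0`, which holds automatically since `ν_j / 0 = 0` in
Lean and the summand is multiplied by the span). -/
theorem stmt_11 (N : ℕ) (q : ℕ → ℕ) (Ibar : ℕ → ℝ → ℝ)
    (hconc : ∀ j < N, ConcaveOn ℝ (Set.Icc (0 : ℝ) (q j : ℝ)) (Ibar j))
    (h0 : ∀ j < N, Ibar j 0 = 0)
    (hnonneg : ∀ j < N, ∀ r ∈ Set.Icc (0 : ℝ) (q j : ℝ), 0 ≤ Ibar j r)
    (W W' ν : ℕ → ℕ)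
    (hWW' : ∀ j < N, W j ≤ W' j)
    (hν : ∀ j < N, ν j ≤ W j * q j) :
    ∑ j ∈ Finset.range N, Ibar j ((ν j : ℝ) / (W j : ℝ)) * (W j : ℝ) ≤
      ∑ j ∈ Finset.range N, Ibar j ((ν j : ℝ) / (W' j : ℝ)) * (W' j : ℝ) :=
  stmt_11_general N q Ibar hconc h0 W W' ν hWW' hν
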